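/- arXiv:2311.05321 — 2 statements merged into one kernel-verified Lean document; each statement's English description precedes it below -/
import Mathlib

section
/- For every (v,q) ∈ V × Q there exists a pair (w,r) ∈ V × Q such that (‖w‖_V² + ‖r‖_Q²)^{1/2} ≤ √2/γ and ‖v‖_V + ‖q‖_Q ≤ Re A((w,r);(v,q)), where γ := (1/2) · (α⁻²(1 + 2C_b²M²)² + 2C_b²)^{-1/2}. This is the stability statement for the adjoint (dual) Oseen-type saddle-point form, which acts through the first argument of A. -/
/-!
Test `(v, q)` against `β (v, q) - (ũ, 0)`, where `ũ` is the right inverse of the coupling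
at `q` and `β = (1 + C_b² M²) / (2α)`. In the real part the coupling terms
`d(q,v) - conj d(q,v)` cancel, leaving `β Re a(v,v) - Re a(ũ,v) + ‖q‖²`; coercivity and
Young's inequality bound this below by `(‖v‖² + ‖q‖²) / 2`, while the test pair has squared
norm at most `(2β² + 2C_b²)(‖v‖² + ‖q‖²)`. Rescaling the test pair so that the real part
becomes `‖v‖ + ‖q‖` gives the claim.
-/

open ComplexConjugate

section Algebra

variable {V Q : Type*} [AddCommGroup V] [Module ℂ V] [AddCommGroup Q] [Module ℂ Q]
  (a : V →ₗ[ℂ] V →ₛₗ[starRingEnd ℂ] ℂ)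
  (d : Q →ₗ[ℂ] V →ₛₗ[starRingEnd ℂ] ℂ)

def saddleForm (x y : V × Q) : ℂ := a x.1 y.1 + d x.2 y.1 - conj (d y.2 x.1)

theorem saddleForm_smul_left (c : ℂ) (x y : V × Q) :
    saddleForm a d (c • x) y = c * saddleForm a d x y := by
  simp only [saddleForm, Prod.smul_fst, Prod.smul_snd, map_smul, LinearMap.smul_apply,
    LinearMap.map_smulₛₗ, smul_eq_mul, map_mul, Complex.conj_conj]
  ring

theorem re_saddleForm_test_pair (β : ℝ) (u v : V) (q : Q) :
    (saddleForm a d ((β : ℂ) • (v, q) - (u, 0)) (v, q)).re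
      = β * (a v v).re - (a u v).re + (d q u).re := by
  simp only [saddleForm, Prod.fst_sub, Prod.snd_sub, Prod.smul_fst, Prod.smul_snd, sub_zero,
    map_sub, map_smul, LinearMap.sub_apply, LinearMap.smul_apply, LinearMap.map_smulₛₗ,
    smul_eq_mul, Complex.conj_ofReal, Complex.add_re, Complex.sub_re, Complex.re_ofReal_mul,
    Complex.conj_re]
  ring

end Algebra

section Norms

variable {V Q : Type*} [NormedAddCommGroup V] [NormedSpace ℂ V] [NormedAddCommGroup Q]

theorem half_norm_sq_add_le_re_test_pair (a : V →ₗ[ℂ] V →ₛₗ[starRingEnd ℂ] ℂ)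
    {α M C : ℝ} (hα : 0 < α) (hM : 0 ≤ M) {u v : V} {q : Q}
    (hcoer : α * ‖v‖ ^ 2 ≤ (a v v).re) (hcont : ‖a u v‖ ≤ M * ‖u‖ * ‖v‖)
    (hu : ‖u‖ ≤ C * ‖q‖) :
    (‖v‖ ^ 2 + ‖q‖ ^ 2) / 2
      ≤ (1 + C ^ 2 * M ^ 2) / (2 * α) * (a v v).re - (a u v).re + ‖q‖ ^ 2 := by
  have hcoer' :
      (1 + C ^ 2 * M ^ 2) / 2 * ‖v‖ ^ 2 ≤ (1 + C ^ 2 * M ^ 2) / (2 * α) * (a v v).re :=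
    calc (1 + C ^ 2 * M ^ 2) / 2 * ‖v‖ ^ 2
        = (1 + C ^ 2 * M ^ 2) / (2 * α) * (α * ‖v‖ ^ 2) := by field_simp
      _ ≤ (1 + C ^ 2 * M ^ 2) / (2 * α) * (a v v).re := by gcongr
  have hcont' : (a u v).re ≤ M * C * ‖q‖ * ‖v‖ :=
    calc (a u v).re ≤ ‖a u v‖ := Complex.re_le_norm _
      _ ≤ M * ‖u‖ * ‖v‖ := hcont
      _ ≤ M * (C * ‖q‖) * ‖v‖ := by gcongr
      _ = M * C * ‖q‖ * ‖v‖ := by ring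
  nlinarith [sq_nonneg (C * M * ‖v‖ - ‖q‖)]

theorem norm_sq_add_norm_sq_test_pair_le [NormedSpace ℂ Q] {β C : ℝ} (hβ : 0 ≤ β) (c : ℝ)
    {u v : V} {q : Q} (hu : ‖u‖ ≤ C * ‖q‖) :
    ‖(c : ℂ) • ((β : ℂ) • v - u)‖ ^ 2 + ‖(c : ℂ) • (β : ℂ) • q‖ ^ 2
      ≤ c ^ 2 * ((2 * β ^ 2 + 2 * C ^ 2) * (‖v‖ ^ 2 + ‖q‖ ^ 2)) := by
  have hw : ‖(β : ℂ) • v - u‖ ≤ β * ‖v‖ + C * ‖q‖ :=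
    calc ‖(β : ℂ) • v - u‖ ≤ ‖(β : ℂ) • v‖ + ‖u‖ := norm_sub_le _ _
      _ ≤ β * ‖v‖ + C * ‖q‖ := by
        rw [norm_smul, Complex.norm_real, Real.norm_of_nonneg hβ]; gcongr
  have hw2 : ‖(β : ℂ) • v - u‖ ^ 2 ≤ (β * ‖v‖ + C * ‖q‖) ^ 2 :=
    pow_le_pow_left₀ (norm_nonneg _) hw 2
  have hpair : ‖(β : ℂ) • v - u‖ ^ 2 + (β * ‖q‖) ^ 2
      ≤ (2 * β ^ 2 + 2 * C ^ 2) * (‖v‖ ^ 2 + ‖q‖ ^ 2) := by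
    nlinarith [sq_nonneg (β * ‖v‖ - C * ‖q‖), sq_nonneg (β * ‖q‖), sq_nonneg (C * ‖v‖)]
  simp only [norm_smul, Complex.norm_real, Real.norm_eq_abs, mul_pow, sq_abs, abs_of_nonneg hβ]
  nlinarith [mul_le_mul_of_nonneg_left hpair (sq_nonneg c)]

end Norms

theorem two_mul_div_sq_add_le (α M C : ℝ) :
    2 * ((1 + C ^ 2 * M ^ 2) / (2 * α)) ^ 2 + 2 * C ^ 2
      ≤ α⁻¹ ^ 2 * (1 + 2 * C ^ 2 * M ^ 2) ^ 2 + 2 * C ^ 2 := by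
  have h : (1 + C ^ 2 * M ^ 2) ^ 2 ≤ 2 * (1 + 2 * C ^ 2 * M ^ 2) ^ 2 := by
    nlinarith [sq_nonneg (C * M)]
  calc 2 * ((1 + C ^ 2 * M ^ 2) / (2 * α)) ^ 2 + 2 * C ^ 2
      = α⁻¹ ^ 2 * ((1 + C ^ 2 * M ^ 2) ^ 2 / 2) + 2 * C ^ 2 := by field_simp
    _ ≤ α⁻¹ ^ 2 * (1 + 2 * C ^ 2 * M ^ 2) ^ 2 + 2 * C ^ 2 := by gcongr; linarith

theorem div_sq_mul_le_eight {m P D : ℝ} (hm : m ^ 2 ≤ 2 * P) (hD : P / 2 ≤ D) :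
    (m / D) ^ 2 * P ≤ 8 := by
  have hP : 0 ≤ P := by nlinarith [sq_nonneg m]
  rcases (show 0 ≤ D by linarith).eq_or_lt with rfl | hDpos
  · simp
  rw [div_pow, div_mul_eq_mul_div, div_le_iff₀ (by positivity)]
  nlinarith [mul_le_mul_of_nonneg_right hm hP]

theorem div_mul_cancel_of_sq_le {m P D : ℝ} (hm : m ^ 2 ≤ 2 * P) (hD : P / 2 ≤ D) :
    m / D * D = m := by
  rcases eq_or_ne D 0 with rfl | hD0
  · have : m ^ 2 ≤ 0 := by linarith
    simp [pow_eq_zero_iff two_ne_zero |>.mp (le_antisymm this (sq_nonneg m))]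
  · exact div_mul_cancel₀ m hD0

theorem sqrt_two_div_half_div_sqrt {E : ℝ} (hE : 0 ≤ E) :
    Real.sqrt 2 / ((1 / 2) / Real.sqrt E) = Real.sqrt (8 * E) := by
  rw [show (8 : ℝ) * E = 2 ^ 2 * 2 * E by norm_num, Real.sqrt_mul (by positivity),
    Real.sqrt_mul (by positivity), Real.sqrt_sq (by norm_num)]
  rcases hE.eq_or_lt with rfl | hEpos
  · simp
  · have := Real.sqrt_pos.mpr hEpos
    field_simp

theorem oseen_saddle_stability_dual_general
    {V Q : Type*} [NormedAddCommGroup V] [InnerProductSpace ℂ V]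
    [NormedAddCommGroup Q] [InnerProductSpace ℂ Q]
    (a : V →ₗ[ℂ] V →ₛₗ[starRingEnd ℂ] ℂ)
    (d : Q →ₗ[ℂ] V →ₛₗ[starRingEnd ℂ] ℂ)
    (α M C_b : ℝ) (hα : 0 < α) (hM : 0 < M)
    (hcoer : ∀ v : V, α * ‖v‖ ^ 2 ≤ (a v v).re)
    (hcont : ∀ u v : V, ‖a u v‖ ≤ M * ‖u‖ * ‖v‖)
    (hinv : ∀ q : Q, ∃ vt : V, d q vt = (‖q‖ : ℂ) ^ 2 ∧ ‖vt‖ ≤ C_b * ‖q‖)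
    (A : V × Q → V × Q → ℂ)
    (hA : ∀ (u : V) (p : Q) (v : V) (q : Q),
      A (u, p) (v, q) = a u v + d p v - starRingEnd ℂ (d q u))
    (γ : ℝ)
    (hγ : γ = (1 / 2) / Real.sqrt (α⁻¹ ^ 2 * (1 + 2 * C_b ^ 2 * M ^ 2) ^ 2 + 2 * C_b ^ 2))
    (v : V) (q : Q) :
    ∃ (w : V) (r : Q),
      Real.sqrt (‖w‖ ^ 2 + ‖r‖ ^ 2) ≤ Real.sqrt 2 / γ ∧
      ‖v‖ + ‖q‖ ≤ (A (w, r) (v, q)).re := by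
  obtain ⟨u, hdu, hu⟩ := hinv q
  set β := (1 + C_b ^ 2 * M ^ 2) / (2 * α)
  set D := β * (a v v).re - (a u v).re + ‖q‖ ^ 2
  set c := (‖v‖ + ‖q‖) / D
  have hD : (‖v‖ ^ 2 + ‖q‖ ^ 2) / 2 ≤ D :=
    half_norm_sq_add_le_re_test_pair a hα hM.le (hcoer v) (hcont u v) hu
  have hm : (‖v‖ + ‖q‖) ^ 2 ≤ 2 * (‖v‖ ^ 2 + ‖q‖ ^ 2) := by
    nlinarith [sq_nonneg (‖v‖ - ‖q‖)]
  have hβ : 0 ≤ β := by positivity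
  refine ⟨(c : ℂ) • ((β : ℂ) • v - u), (c : ℂ) • (β : ℂ) • q, ?_, ?_⟩
  · rw [hγ, sqrt_two_div_half_div_sqrt (by positivity)]
    refine Real.sqrt_le_sqrt ((norm_sq_add_norm_sq_test_pair_le hβ c hu).trans ?_)
    calc c ^ 2 * ((2 * β ^ 2 + 2 * C_b ^ 2) * (‖v‖ ^ 2 + ‖q‖ ^ 2))
        = (c ^ 2 * (‖v‖ ^ 2 + ‖q‖ ^ 2)) * (2 * β ^ 2 + 2 * C_b ^ 2) := by ring
      _ ≤ 8 * (α⁻¹ ^ 2 * (1 + 2 * C_b ^ 2 * M ^ 2) ^ 2 + 2 * C_b ^ 2) :=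
        mul_le_mul (div_sq_mul_le_eight hm hD) (two_mul_div_sq_add_le α M C_b) (by positivity)
          (by norm_num)
  · have hA_test : A ((c : ℂ) • ((β : ℂ) • v - u), (c : ℂ) • (β : ℂ) • q) (v, q)
        = saddleForm a d ((c : ℂ) • ((β : ℂ) • (v, q) - (u, 0))) (v, q) := by
      rw [hA, Prod.smul_mk, Prod.mk_sub_mk, sub_zero, Prod.smul_mk]; rfl
    rw [hA_test, saddleForm_smul_left, Complex.re_ofReal_mul, re_saddleForm_test_pair, hdu,
      ← Complex.ofReal_pow, Complex.ofReal_re]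
    exact (div_mul_cancel_of_sq_le hm hD).ge

/-- Stability of the Oseen-type saddle-point form `A` (acting through its first
argument): for every `(v,q)` there is a test pair `(w,r)` of norm at most `√2/γ`
with `‖v‖ + ‖q‖ ≤ Re A((w,r);(v,q))`. -/
theorem oseen_saddle_stability_dual
    {V Q : Type*} [NormedAddCommGroup V] [InnerProductSpace ℂ V] [CompleteSpace V]
    [NormedAddCommGroup Q] [InnerProductSpace ℂ Q] [CompleteSpace Q]
    (a : V →ₗ[ℂ] V →ₛₗ[starRingEnd ℂ] ℂ)
    (d : Q →ₗ[ℂ] V →ₛₗ[starRingEnd ℂ] ℂ)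
    (α M M_d C_b : ℝ) (hα : 0 < α) (hM : 0 < M) (hMd : 0 < M_d) (hCb : 0 < C_b)
    (hcoer : ∀ v : V, α * ‖v‖ ^ 2 ≤ (a v v).re)
    (hcont : ∀ u v : V, ‖a u v‖ ≤ M * ‖u‖ * ‖v‖)
    (hdbdd : ∀ (q : Q) (v : V), ‖d q v‖ ≤ M_d * ‖q‖ * ‖v‖)
    (hinv : ∀ q : Q, ∃ vt : V, d q vt = (‖q‖ : ℂ) ^ 2 ∧ ‖vt‖ ≤ C_b * ‖q‖)
    (A : V × Q → V × Q → ℂ)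
    (hA : ∀ (u : V) (p : Q) (v : V) (q : Q),
      A (u, p) (v, q) = a u v + d p v - starRingEnd ℂ (d q u))
    (γ : ℝ)
    (hγ : γ = (1 / 2) / Real.sqrt (α⁻¹ ^ 2 * (1 + 2 * C_b ^ 2 * M ^ 2) ^ 2 + 2 * C_b ^ 2))
    (v : V) (q : Q) :
    ∃ (w : V) (r : Q),
      Real.sqrt (‖w‖ ^ 2 + ‖r‖ ^ 2) ≤ Real.sqrt 2 / γ ∧
      ‖v‖ + ‖q‖ ≤ (A (w, r) (v, q)).re :=
  oseen_saddle_stability_dual_general a d α M C_b hα hM hcoer hcont hinv A hA γ hγ v q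
end

section
/- Let f ∈ H. Suppose (u,p) ∈ V × Q solves the Oseen source problem: a(u,v) + d(p,v) = ⟨f, ι v⟩_H for all v ∈ V and d(q,u) = 0 for all q ∈ Q, and suppose (u_S,p_S) ∈ V × Q solves the corresponding Stokes source problem (the same system with the convective form removed): ν⟨u_S,v⟩_V + d(p_S,v) = ⟨f, ι v⟩_H for all v ∈ V and d(q,u_S) = 0 for all q ∈ Q. Then ‖u − u_S‖_V ≤ C_p(B/ν)‖u‖_V, and consequently ‖u − u_S‖_V ≤ C_p²(B/ν²)‖f‖_H. In particular, the Oseen solution operator converges to the Stokes solution operator in norm as the convective bound B tends to zero. -/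
/-!
Subtracting the Stokes system from the Oseen system and testing with the error `e = u - u_S`,
which satisfies `d(q, e) = 0`, kills both pressure terms and leaves
`ν ‖e‖² = -Re c(u, e) ≤ B ‖u‖ ‖ι e‖ ≤ C_p B ‖u‖ ‖e‖`. Testing the Oseen system with `u` itself,
the convective term drops out of the real part because `Re c(u, u) = 0`, which gives the
a priori bound `ν ‖u‖ ≤ C_p ‖f‖`.
-/

open scoped InnerProductSpace

lemma le_div_of_mul_sq_le_mul {ν K x : ℝ} (hν : 0 < ν) (hK : 0 ≤ K) (hx : 0 ≤ x)
    (h : ν * x ^ 2 ≤ K * x) : x ≤ K / ν := by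
  rw [le_div_iff₀ hν]
  rcases hx.eq_or_lt with rfl | hx
  · simpa using hK
  · nlinarith

section Oseen

variable {V Q : Type*} [NormedAddCommGroup V] [InnerProductSpace ℂ V]
  [AddCommGroup Q] [Module ℂ Q]

lemma re_ofReal_mul_inner_self (ν : ℝ) (w : V) :
    ((ν : ℂ) * ⟪w, w⟫_ℂ).re = ν * ‖w‖ ^ 2 := by
  rw [Complex.re_ofReal_mul, ← inner_self_eq_norm_sq (𝕜 := ℂ)]
  rfl

lemma norm_le_div_of_re_inner_self_le {ν K : ℝ} (hν : 0 < ν) (hK : 0 ≤ K) {w : V}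
    (h : ((ν : ℂ) * ⟪w, w⟫_ℂ).re ≤ K * ‖w‖) : ‖w‖ ≤ K / ν :=
  le_div_of_mul_sq_le_mul hν hK (norm_nonneg w) (re_ofReal_mul_inner_self ν w ▸ h)

variable {ν : ℝ} {c : V →ₗ[ℂ] V →ₛₗ[starRingEnd ℂ] ℂ} {d : Q →ₗ[ℂ] V →ₛₗ[starRingEnd ℂ] ℂ}
  {ℓ : V → ℂ} {u u_S : V} {p p_S : Q}

lemma oseen_sub_stokes_inner_add_eq_zero
    (hsol : ∀ v, (ν : ℂ) * ⟪v, u⟫_ℂ + c u v + d p v = ℓ v)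
    (hsolS : ∀ v, (ν : ℂ) * ⟪v, u_S⟫_ℂ + d p_S v = ℓ v)
    {w : V} (hw : ∀ q, d q w = 0) :
    (ν : ℂ) * ⟪w, u - u_S⟫_ℂ + c u w = 0 := by
  have h := hsol w
  have hS := hsolS w
  rw [hw, add_zero] at h hS
  rw [inner_sub_right]
  linear_combination h - hS

variable {H : Type*} [NormedAddCommGroup H] [InnerProductSpace ℂ H]
  {ι : V →L[ℂ] H} {C_p B : ℝ}

lemma norm_oseen_sub_stokes_le (hCp : 0 < C_p) (hι : ∀ v, ‖ι v‖ ≤ C_p * ‖v‖)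
    (hν : 0 < ν) (hB : 0 ≤ B) (hcb : ∀ u v, ‖c u v‖ ≤ B * ‖u‖ * ‖ι v‖)
    (hsol : ∀ v, (ν : ℂ) * ⟪v, u⟫_ℂ + c u v + d p v = ℓ v)
    (hdiv : ∀ q, d q u = 0)
    (hsolS : ∀ v, (ν : ℂ) * ⟪v, u_S⟫_ℂ + d p_S v = ℓ v)
    (hdivS : ∀ q, d q u_S = 0) :
    ‖u - u_S‖ ≤ C_p * (B / ν) * ‖u‖ := by
  set e := u - u_S
  have hdive : ∀ q, d q e = 0 := fun q ↦ by simp [e, hdiv q, hdivS q]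
  have herr : (ν : ℂ) * ⟪e, e⟫_ℂ = -c u e :=
    eq_neg_of_add_eq_zero_left (oseen_sub_stokes_inner_add_eq_zero hsol hsolS hdive)
  have hK : 0 ≤ C_p * B * ‖u‖ := by positivity
  have := norm_le_div_of_re_inner_self_le hν hK <| calc
    ((ν : ℂ) * ⟪e, e⟫_ℂ).re = (-c u e).re := by rw [herr]
    _ ≤ ‖c u e‖ := (Complex.re_le_norm _).trans (norm_neg _).le
    _ ≤ B * ‖u‖ * (C_p * ‖e‖) := (hcb u e).trans (by gcongr; exact hι e)
    _ = C_p * B * ‖u‖ * ‖e‖ := by ring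
  calc ‖e‖ ≤ C_p * B * ‖u‖ / ν := this
    _ = C_p * (B / ν) * ‖u‖ := by ring

lemma norm_oseen_le (hCp : 0 < C_p) (hι : ∀ v, ‖ι v‖ ≤ C_p * ‖v‖) (hν : 0 < ν)
    (hc0 : ∀ v, (c v v).re = 0) {f : H}
    (hsol : ∀ v, (ν : ℂ) * ⟪v, u⟫_ℂ + c u v + d p v = ⟪ι v, f⟫_ℂ)
    (hdiv : ∀ q, d q u = 0) :
    ‖u‖ ≤ C_p * ‖f‖ / ν := by
  refine norm_le_div_of_re_inner_self_le hν (by positivity) <| calc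
    ((ν : ℂ) * ⟪u, u⟫_ℂ).re = ((ν : ℂ) * ⟪u, u⟫_ℂ + c u u + d p u).re := by
      rw [hdiv, add_zero, Complex.add_re, hc0, add_zero]
    _ = (⟪ι u, f⟫_ℂ).re := by rw [hsol]
    _ ≤ ‖ι u‖ * ‖f‖ := (Complex.re_le_norm _).trans (norm_inner_le_norm _ _)
    _ ≤ C_p * ‖u‖ * ‖f‖ := by gcongr; exact hι u
    _ = C_p * ‖f‖ * ‖u‖ := by ring

end Oseen

theorem oseen_to_stokes_convergence_general
    {V H Q : Type*} [NormedAddCommGroup V] [InnerProductSpace ℂ V]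
    [NormedAddCommGroup H] [InnerProductSpace ℂ H]
    [NormedAddCommGroup Q] [InnerProductSpace ℂ Q]
    (ι : V →L[ℂ] H) (C_p : ℝ) (hCp : 0 < C_p)
    (hι : ∀ v : V, ‖ι v‖ ≤ C_p * ‖v‖)
    (ν : ℝ) (hν : 0 < ν)
    (c : V →ₗ[ℂ] V →ₛₗ[starRingEnd ℂ] ℂ) (B : ℝ) (hB : 0 ≤ B)
    (hc0 : ∀ v : V, (c v v).re = 0)
    (hcb : ∀ u v : V, ‖c u v‖ ≤ B * ‖u‖ * ‖ι v‖)
    (d : Q →ₗ[ℂ] V →ₛₗ[starRingEnd ℂ] ℂ)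
    (f : H) (u u_S : V) (p p_S : Q)
    (hsol : ∀ v : V,
      (ν : ℂ) * (inner ℂ v u : ℂ) + c u v + d p v = (inner ℂ (ι v) f : ℂ))
    (hdiv : ∀ q : Q, d q u = 0)
    (hsolS : ∀ v : V,
      (ν : ℂ) * (inner ℂ v u_S : ℂ) + d p_S v = (inner ℂ (ι v) f : ℂ))
    (hdivS : ∀ q : Q, d q u_S = 0) :
    ‖u - u_S‖ ≤ C_p * (B / ν) * ‖u‖ ∧
    ‖u - u_S‖ ≤ C_p ^ 2 * (B / ν ^ 2) * ‖f‖ := by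
  have herr := norm_oseen_sub_stokes_le hCp hι hν hB hcb hsol hdiv hsolS hdivS
  refine ⟨herr, herr.trans ?_⟩
  calc C_p * (B / ν) * ‖u‖ ≤ C_p * (B / ν) * (C_p * ‖f‖ / ν) := by
        gcongr; exact norm_oseen_le hCp hι hν hc0 hsol hdiv
    _ = C_p ^ 2 * (B / ν ^ 2) * ‖f‖ := by field_simp

/-- Convergence of the Oseen solution to the Stokes solution as the convective
bound `B` tends to zero: `‖u − u_S‖_V ≤ C_p(B/ν)‖u‖_V` and consequently
`‖u − u_S‖_V ≤ C_p²(B/ν²)‖f‖_H`. -/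
theorem oseen_to_stokes_convergence
    {V H Q : Type*} [NormedAddCommGroup V] [InnerProductSpace ℂ V] [CompleteSpace V]
    [NormedAddCommGroup H] [InnerProductSpace ℂ H] [CompleteSpace H]
    [NormedAddCommGroup Q] [InnerProductSpace ℂ Q] [CompleteSpace Q]
    (ι : V →L[ℂ] H) (C_p : ℝ) (hCp : 0 < C_p)
    (hι : ∀ v : V, ‖ι v‖ ≤ C_p * ‖v‖)
    (ν : ℝ) (hν : 0 < ν)
    (c : V →ₗ[ℂ] V →ₛₗ[starRingEnd ℂ] ℂ) (B : ℝ) (hB : 0 ≤ B)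
    (hc0 : ∀ v : V, (c v v).re = 0)
    (hcb : ∀ u v : V, ‖c u v‖ ≤ B * ‖u‖ * ‖ι v‖)
    (d : Q →ₗ[ℂ] V →ₛₗ[starRingEnd ℂ] ℂ) (M_d : ℝ)
    (hd : ∀ (q : Q) (v : V), ‖d q v‖ ≤ M_d * ‖q‖ * ‖v‖)
    (f : H) (u u_S : V) (p p_S : Q)
    (hsol : ∀ v : V,
      (ν : ℂ) * (inner ℂ v u : ℂ) + c u v + d p v = (inner ℂ (ι v) f : ℂ))
    (hdiv : ∀ q : Q, d q u = 0)
    (hsolS : ∀ v : V,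
      (ν : ℂ) * (inner ℂ v u_S : ℂ) + d p_S v = (inner ℂ (ι v) f : ℂ))
    (hdivS : ∀ q : Q, d q u_S = 0) :
    ‖u - u_S‖ ≤ C_p * (B / ν) * ‖u‖ ∧
    ‖u - u_S‖ ≤ C_p ^ 2 * (B / ν ^ 2) * ‖f‖ :=
  oseen_to_stokes_convergence_general ι C_p hCp hι ν hν c B hB hc0 hcb d f u u_S p p_S hsol hdiv
    hsolS hdivS
end
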